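/- Let k, m, n, s be integers with k ≥ 3, m ≥ 3, n ≥ (k-1)m + 1, and 2 ≤ s ≤ m - 1. Define ψ(x) = (k-2)x² - (2km + kn - 3m - n - 2ks - 2k + 2s + 2)x - kms - km + ms + m - kns - kn + ns + n + km² - m² + kmn - mn, viewed as a real quadratic with positive leading coefficient k - 2 > 0. Then for every real x with m + (k-1)s ≤ x ≤ m + n, ψ(x) ≤ max(ψ(m + (k-1)s), ψ(m + n)) < 0. -/

import Mathlib

/-!
Since `k ≥ 2`, ψ is convex, so on `[m + (k-1)s, m + n]` it is bounded by its values at the two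
endpoints. Both endpoint values factor, `ψ(m + n) = (m + n)((k-1)(s+1) - n)` and
`ψ(m + (k-1)s) = (k-1)((k-1)s(ks+2) + m - n(ks+1))`, and `n ≥ (k-1)m + 1` with `s < m`
makes the second factor negative in each case.
-/

/-- ψ(x) as in the paper, viewed as a real quadratic. -/
def psi (k m n s x : ℝ) : ℝ :=
  (k-2)*x^2 - (2*k*m + k*n - 3*m - n - 2*k*s - 2*k + 2*s + 2)*x
    - k*m*s - k*m + m*s + m - k*n*s - k*n + n*s + n + k*m^2 - m^2 + k*m*n - m*n

open Set

lemma convexOn_quadratic {a : ℝ} (ha : 0 ≤ a) (b c : ℝ) :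
    ConvexOn ℝ univ fun x : ℝ ↦ a * x ^ 2 + b * x + c :=
  ((even_two.convexOn_pow.smul ha).add
    ((LinearMap.mulLeft ℝ b).convexOn convex_univ)).add_const c

lemma convexOn_psi {k : ℝ} (hk : 2 ≤ k) (m n s : ℝ) : ConvexOn ℝ univ (psi k m n s) := by
  convert convexOn_quadratic (sub_nonneg.2 hk) (-(2*k*m + k*n - 3*m - n - 2*k*s - 2*k + 2*s + 2))
    (- k*m*s - k*m + m*s + m - k*n*s - k*n + n*s + n + k*m^2 - m^2 + k*m*n - m*n) using 1
  funext x
  simp only [psi]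
  ring

lemma psi_left_endpoint_eq (k m n s : ℝ) :
    psi k m n s (m + (k - 1) * s) = (k - 1) * ((k - 1) * s * (k * s + 2) + m - n * (k * s + 1)) := by
  simp only [psi]; ring

lemma psi_right_endpoint_eq (k m n s : ℝ) :
    psi k m n s (m + n) = (m + n) * ((k - 1) * (s + 1) - n) := by
  simp only [psi]; ring

lemma psi_left_endpoint_neg {k m n s : ℝ} (hk : 2 ≤ k) (hn : (k - 1) * m + 1 ≤ n) (hs : 0 ≤ s)
    (hsm : s ≤ m) : psi k m n s (m + (k - 1) * s) < 0 := by
  rw [psi_left_endpoint_eq]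
  refine mul_neg_of_pos_of_neg (by linarith) ?_
  have hms := sub_nonneg.2 hsm
  have hk2 := sub_nonneg.2 hk
  have hk1 : 0 ≤ k - 1 := by linarith
  have : ((k - 1) * m + 1) * (k * s + 1) ≤ n * (k * s + 1) := by gcongr
  have : ((k - 1) * m + 1) * (k * s + 1) - ((k - 1) * s * (k * s + 2) + m)
      = (k - 1) * k * s * (m - s) + (k - 2) * (m - s) + 1 := by ring
  have : 0 ≤ (k - 1) * k * s * (m - s) + (k - 2) * (m - s) := by positivity
  linarith

lemma psi_right_endpoint_neg {k m n s : ℝ} (hk : 1 ≤ k) (hn : (k - 1) * m + 1 ≤ n) (hs : 0 ≤ s)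
    (hsm : s + 1 ≤ m) : psi k m n s (m + n) < 0 := by
  rw [psi_right_endpoint_eq]
  have : (k - 1) * (s + 1) ≤ (k - 1) * m := by gcongr
  have : 0 ≤ (k - 1) * m := mul_nonneg (by linarith) (by linarith)
  exact mul_neg_of_pos_of_neg (by linarith) (by linarith)

theorem stmt_9_general (k m n s : ℤ) (hk : 3 ≤ k)
    (hn : (k-1)*m + 1 ≤ n) (hs1 : 2 ≤ s) (hs2 : s ≤ m - 1) :
    ∀ x : ℝ, (m : ℝ) + (k-1)*s ≤ x → x ≤ (m : ℝ) + n →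
      psi k m n s x ≤
        max (psi k m n s ((m : ℝ) + (k-1)*s)) (psi k m n s ((m : ℝ) + n)) ∧
      max (psi k m n s ((m : ℝ) + (k-1)*s)) (psi k m n s ((m : ℝ) + n)) < 0 := by
  intro x hxa hxb
  have hk' : (3 : ℝ) ≤ k := by exact_mod_cast hk
  have hn' : ((k : ℝ) - 1) * m + 1 ≤ n := by exact_mod_cast hn
  have hs1' : (2 : ℝ) ≤ s := by exact_mod_cast hs1
  have hs2' : (s : ℝ) + 1 ≤ m := by exact_mod_cast (by omega : s + 1 ≤ m)
  refine ⟨(convexOn_psi (by linarith) _ _ _).le_max_of_mem_Icc trivial trivial ⟨hxa, hxb⟩,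
    max_lt ?_ ?_⟩
  · exact psi_left_endpoint_neg (by linarith) hn' (by linarith) (by linarith)
  · exact psi_right_endpoint_neg (by linarith) hn' (by linarith) hs2'

theorem stmt_9 (k m n s : ℤ) (hk : 3 ≤ k) (hm : 3 ≤ m)
    (hn : (k-1)*m + 1 ≤ n) (hs1 : 2 ≤ s) (hs2 : s ≤ m - 1) :
    ∀ x : ℝ, (m : ℝ) + (k-1)*s ≤ x → x ≤ (m : ℝ) + n →
      psi k m n s x ≤
        max (psi k m n s ((m : ℝ) + (k-1)*s)) (psi k m n s ((m : ℝ) + n)) ∧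
      max (psi k m n s ((m : ℝ) + (k-1)*s)) (psi k m n s ((m : ℝ) + n)) < 0 :=
  stmt_9_general k m n s hk hn hs1 hs2
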